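/- Let G be a triangle-free graph containing a facial 5-cycle v1v2v3v4v5 with all five vertices of degree exactly 3, and for i=1,...,4 let x_i be the third neighbor of v_i, where x1 and x3 are distinct and non-adjacent and have no common neighbor outside {v1,...,v5}. Let G' be obtained from G − {v1,...,v5} by adding the edge x1x3. Then G' is triangle-free and every proper 3-coloring of G' extends to a proper 3-coloring of G. -/

import Mathlib

/-- `l` lists the vertices of a cycle of `G` in cyclic order. -/
def IsCycleList {V : Type} (G : SimpleGraph V) (l : List V) : Prop :=
  3 ≤ l.length ∧ l.Nodup ∧ l.Chain' G.Adj ∧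
    ∀ h : l ≠ [], G.Adj (l.getLast h) (l.head h)

/-- The edges of the cycle whose vertices are listed (in cyclic order) by `l`. -/
def cycleEdges {V : Type} (l : List V) : List (Sym2 V) :=
  (l.zip (l.rotate 1)).map fun p => s(p.1, p.2)

/-- A combinatorial model of a finite simple graph drawn in the plane, together with its
faces.  `bounds f l` says that the cycle listed by `l` bounds the face `f`; `vinc v f` says
that the vertex `v` is incident with the face `f`; `inside l` is the set of vertices of the
graph lying in the open disk bounded by the cycle listed by `l`.  Euler's formula and the
face handshake identity are part of the data. -/
structure PlaneGraph (V : Type) [Fintype V] [DecidableEq V] where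
  graph : SimpleGraph V
  Face : Type
  [fintypeFace : Fintype Face]
  [decEqFace : DecidableEq Face]
  outer : Face
  len : Face → ℕ
  bounds : Face → List V → Prop
  vinc : V → Face → Prop
  inside : List V → Set V
  euler : (Fintype.card V : ℤ) - graph.edgeSet.ncard + Fintype.card Face
      = 1 + Nat.card graph.ConnectedComponent
  handshake : (∑ f : Face, (len f : ℤ)) = 2 * graph.edgeSet.ncard
  bounds_isCycle : ∀ f l, bounds f l → IsCycleList graph l
  bounds_len : ∀ f l, bounds f l → len f = l.length
  bounds_rotate : ∀ f l, bounds f l → bounds f (l.rotate 1)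
  bounds_reverse : ∀ f l, bounds f l → bounds f l.reverse
  vinc_ncard_le : ∀ f, Set.ncard {v | vinc v f} ≤ len f
  mem_bounds_vinc : ∀ f l v, bounds f l → v ∈ l → vinc v f

attribute [instance] PlaneGraph.fintypeFace PlaneGraph.decEqFace

namespace PlaneGraph

variable {V : Type} [Fintype V] [DecidableEq V]

/-- The degree of a vertex. -/
noncomputable def deg (P : PlaneGraph V) (v : V) : ℕ := (P.graph.neighborSet v).ncard

/-- The list `l` is a facial cycle (in cyclic order). -/
def IsFacial (P : PlaneGraph V) (l : List V) : Prop := ∃ f, P.bounds f l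

/-- Every path of length at most 3 joining `a` and `b` is a subgraph of the cycle `l`. -/
def DiagSafe (P : PlaneGraph V) (l : List V) (a b : V) : Prop :=
  ∀ p : P.graph.Walk a b, p.IsPath → p.length ≤ 3 → ∀ e ∈ p.edges, e ∈ cycleEdges l

/-- A vertex is `C`-admissible if it is small (degree < 60) and not on `C`. -/
def Admissible (P : PlaneGraph V) (C : List V) (v : V) : Prop := P.deg v < 60 ∧ v ∉ C

def SafeTetragram (P : PlaneGraph V) (v1 v2 v3 v4 : V) : Prop :=
  P.IsFacial [v1, v2, v3, v4] ∧ P.DiagSafe [v1, v2, v3, v4] v1 v3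

def SafeHexagram (P : PlaneGraph V) (v1 v2 v3 v4 v5 v6 : V) : Prop :=
  P.IsFacial [v1, v2, v3, v4, v5, v6] ∧
    ∀ p : P.graph.Walk v1 v3, p.IsPath → p.length ≤ 3 → p.support = [v1, v2, v3]

/-- A facial 5-cycle whose first four vertices have degree 3, with `x i` the third
neighbor of `v i`. -/
def Pentagram (P : PlaneGraph V) (v1 v2 v3 v4 v5 x1 x2 x3 x4 : V) : Prop :=
  P.IsFacial [v1, v2, v3, v4, v5] ∧
  (P.deg v1 = 3 ∧ P.deg v2 = 3 ∧ P.deg v3 = 3 ∧ P.deg v4 = 3) ∧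
  (P.graph.Adj v1 x1 ∧ x1 ≠ v5 ∧ x1 ≠ v2) ∧
  (P.graph.Adj v2 x2 ∧ x2 ≠ v1 ∧ x2 ≠ v3) ∧
  (P.graph.Adj v3 x3 ∧ x3 ≠ v2 ∧ x3 ≠ v4) ∧
  (P.graph.Adj v4 x4 ∧ x4 ≠ v3 ∧ x4 ≠ v5)

def SafePentagram (P : PlaneGraph V) (v1 v2 v3 v4 v5 x1 x2 x3 x4 : V) : Prop :=
  List.Pairwise (fun a b => a ≠ b ∧ ¬P.graph.Adj a b) [x1, x2, x3, x4] ∧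
  (∀ p : P.graph.Walk x2 v5, p.IsPath → p.length ≤ 3 →
      ¬∀ w ∈ p.support, w ∉ ([v1, v2, v3, v4] : List V)) ∧
  (∀ p : P.graph.Walk x3 x4, p.IsPath → p.length ≤ 3 →
      (∀ w ∈ p.support, w ∉ ([v1, v2, v3, v4] : List V)) →
      p.length = 2 ∧ ∃ y, p.support = [x3, y, x4] ∧ P.IsFacial [x3, v3, v4, x4, y])

def SecureMonogram (P : PlaneGraph V) (C : List V) (v : V) : Prop :=
  P.deg v ≤ 2 ∧ v ∉ C

def SecureTetragram (P : PlaneGraph V) (C : List V) (v1 v2 v3 v4 : V) : Prop :=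
  P.SafeTetragram v1 v2 v3 v4 ∧ P.Admissible C v1 ∧ P.deg v1 = 3 ∧
  ∀ x, P.graph.Adj v1 x → x ≠ v2 → x ≠ v4 →
    P.Admissible C x ∧
      (P.Admissible C v3 ∨
        ∀ w, P.graph.Adj x w →
          P.Admissible C w ∨ P.IsFacial [v1, v2, w, x] ∨ P.IsFacial [v1, v4, w, x])

def SecureOctagram (P : PlaneGraph V) (C : List V) (v1 v2 v3 v4 : V) : Prop :=
  P.IsFacial [v1, v2, v3, v4] ∧
    ∀ v ∈ ([v1, v2, v3, v4] : List V), P.deg v = 3 ∧ P.Admissible C v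

def SecurePentagram (P : PlaneGraph V) (C : List V) (v1 v2 v3 v4 v5 x1 x2 x3 x4 : V) : Prop :=
  P.Pentagram v1 v2 v3 v4 v5 x1 x2 x3 x4 ∧
  P.SafePentagram v1 v2 v3 v4 v5 x1 x2 x3 x4 ∧
  (∀ v ∈ ([v1, v2, v3, v4, v5, x1, x2, x3, x4] : List V), P.Admissible C v) ∧
  ((∀ w, P.graph.Adj v5 w → P.Admissible C w) ∨ (∀ w, P.graph.Adj x2 w → P.Admissible C w)) ∧
  ((∀ w, P.graph.Adj x3 w → P.Admissible C w) ∨ (∀ w, P.graph.Adj x4 w → P.Admissible C w))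

def SecureDecagram (P : PlaneGraph V) (C : List V) (v1 v2 v3 v4 v5 x1 x2 x3 x4 : V) : Prop :=
  P.Pentagram v1 v2 v3 v4 v5 x1 x2 x3 x4 ∧ P.deg v5 = 3 ∧
  x1 ≠ x3 ∧ ¬P.graph.Adj x1 x3 ∧ (¬∃ y, P.graph.Adj x1 y ∧ P.graph.Adj y x3) ∧
  ∀ v ∈ ([v1, v2, v3, v4, v5, x1, x3] : List V), P.Admissible C v

def SecureHexagram (P : PlaneGraph V) (C : List V) (v1 v2 v3 v4 v5 v6 : V) : Prop :=
  P.SafeHexagram v1 v2 v3 v4 v5 v6 ∧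
  P.Admissible C v1 ∧ P.Admissible C v3 ∧ P.Admissible C v6 ∧ P.deg v1 = 3 ∧
  ∀ x, P.graph.Adj v1 x → x ≠ v2 → x ≠ v6 → P.Admissible C x

/-- `G` contains a `C`-secure multigram. -/
def HasSecureMultigram (P : PlaneGraph V) (C : List V) : Prop :=
  (∃ v, P.SecureMonogram C v) ∨
  (∃ v1 v2 v3 v4, P.SecureTetragram C v1 v2 v3 v4 ∨ P.SecureOctagram C v1 v2 v3 v4) ∨
  (∃ v1 v2 v3 v4 v5 x1 x2 x3 x4,
      P.SecurePentagram C v1 v2 v3 v4 v5 x1 x2 x3 x4 ∨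
      P.SecureDecagram C v1 v2 v3 v4 v5 x1 x2 x3 x4) ∨
  (∃ v1 v2 v3 v4 v5 v6, P.SecureHexagram C v1 v2 v3 v4 v5 v6)

end PlaneGraph

/-- Identify `v` with `u`: all edges at `v` are transferred to `u` (and `v` becomes
isolated); parallel edges are merged. -/
def identifyVerts {V : Type} [DecidableEq V] (G : SimpleGraph V) (u v : V) : SimpleGraph V :=
  SimpleGraph.fromRel fun a b =>
    ∃ x y, G.Adj x y ∧ (if x = v then u else x) = a ∧ (if y = v then u else y) = b

/-- Delete the vertices in `s` (they are kept as isolated vertices). -/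
def deleteVerts {V : Type} (G : SimpleGraph V) (s : Set V) : SimpleGraph V :=
  SimpleGraph.fromRel fun a b => G.Adj a b ∧ a ∉ s ∧ b ∉ s

/-- Add the edge `ab`. -/
def addEdge {V : Type} (G : SimpleGraph V) (a b : V) : SimpleGraph V :=
  G ⊔ SimpleGraph.fromRel fun x y => x = a ∧ y = b

/-- `G` can be drawn in the plane: vertices go to distinct points, edges to arcs, arcs are
simple, meet vertices only at their own endpoints, and two arcs of distinct edges meet
only at common endpoints. -/
def SimpleGraph.IsPlanar {V : Type} (G : SimpleGraph V) : Prop :=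
  ∃ (pos : V → ℝ × ℝ) (arc : ∀ u v, G.Adj u v → _root_.Path (pos u) (pos v)),
    Function.Injective pos ∧
    (∀ u v (h : G.Adj u v), Function.Injective (arc u v h)) ∧
    (∀ u v (h : G.Adj u v) (w : V), pos w ∈ Set.range (arc u v h) → w = u ∨ w = v) ∧
    (∀ u v u' v' (h : G.Adj u v) (h' : G.Adj u' v'), s(u, v) ≠ s(u', v') →
      ∀ p ∈ Set.range (arc u v h) ∩ Set.range (arc u' v' h'), ∃ w, p = pos w)

/-! The five deleted vertices form an induced 5-cycle (a chord would close a triangle) in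
which each `v i` has a single neighbour `x i` off the cycle. A triangle of `G'` must use the
new edge `x1 x3`, so it would come from a common neighbour of `x1` and `x3` outside the cycle.
A 3-colouring `c'` of `G'` gives `x1` and `x3` different colours; the cycle must then be
coloured from the lists `Fin 3 \ {c' (x i)}`, and an odd cycle with 2-element lists is
colourable as soon as two of its lists differ. -/

open Function SimpleGraph

variable {V : Type}

lemma deleteVerts_adj {G : SimpleGraph V} {s : Set V} {a b : V} :
    (deleteVerts G s).Adj a b ↔ G.Adj a b ∧ a ∉ s ∧ b ∉ s := by
  rw [deleteVerts, fromRel_adj]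
  constructor
  · rintro ⟨-, h | ⟨h, hb, ha⟩⟩
    exacts [h, ⟨h.symm, ha, hb⟩]
  · exact fun h => ⟨h.1.ne, Or.inl h⟩

lemma deleteVerts_le (G : SimpleGraph V) (s : Set V) : deleteVerts G s ≤ G :=
  fun _ _ h => (deleteVerts_adj.1 h).1

lemma addEdge_eq_sup_edge [DecidableEq V] (G : SimpleGraph V) (a b : V) :
    addEdge G a b = G ⊔ edge a b := by
  ext x y
  simp only [addEdge, sup_adj, fromRel_adj, edge_adj]
  tauto

lemma IsCycleList.adj_add_one {G : SimpleGraph V} {n : ℕ} [NeZero n] {v : Fin n → V}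
    (h : IsCycleList G (List.ofFn v)) (i : Fin n) : G.Adj (v i) (v (i + 1)) := by
  obtain ⟨-, -, hchain, hlast⟩ := h
  by_cases hi : i.val + 1 < n
  · convert List.isChain_ofFn.1 hchain i hi using 2
    exact Fin.ext (Fin.val_add_one_of_lt' hi)
  · have hadj := hlast (by simp [NeZero.ne n])
    rw [List.getLast_ofFn, List.head_ofFn] at hadj
    obtain ⟨m, rfl⟩ : ∃ m, n = m + 1 := ⟨n - 1, by omega⟩
    obtain rfl : i = Fin.last m := Fin.ext (by rw [Fin.val_last]; omega)
    rw [Fin.last_add_one]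
    exact hadj

namespace SimpleGraph

variable {G : SimpleGraph V}

lemma cliqueFree_three_sup_edge {a b : V} (hG : G.CliqueFree 3)
    (hab : ¬∃ y, G.Adj a y ∧ G.Adj y b) : (G ⊔ edge a b).CliqueFree 3 := by
  classical
  rcases eq_or_ne a b with rfl | hne
  · simpa using hG
  intro t ht
  have ha : a ∈ t := hG.mem_of_sup_edge_isNClique ht
  have hb : b ∈ t := hG.mem_of_sup_edge_isNClique (edge_comm a b ▸ ht)
  obtain ⟨y, hy, hyab⟩ : ∃ y ∈ t, y ∉ ({a, b} : Finset V) :=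
    Finset.exists_mem_notMem_of_card_lt_card
      (by rw [ht.card_eq]; exact Finset.card_le_two.trans_lt (by norm_num))
  simp only [Finset.mem_insert, Finset.mem_singleton, not_or] at hyab
  have hcl := (isClique_sup_edge_of_ne_iff hne).1 ht.isClique
  exact hab ⟨y, hcl.2 ⟨ha, hne⟩ ⟨hy, hyab.2⟩ (Ne.symm hyab.1),
    hcl.1 ⟨hy, hyab.1⟩ ⟨hb, hne.symm⟩ hyab.2⟩

lemma neighborSet_eq_of_ncard_eq_three {v a b c : V} (hv : (G.neighborSet v).ncard = 3)
    (ha : G.Adj v a) (hb : G.Adj v b) (hc : G.Adj v c) (hab : a ≠ b) (hac : a ≠ c)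
    (hbc : b ≠ c) : G.neighborSet v = {a, b, c} :=
  (Set.eq_of_subset_of_ncard_le (by simp [Set.insert_subset_iff, ha, hb, hc])
    (by rw [hv, Set.ncard_eq_three.2 ⟨a, b, c, hab, hac, hbc, rfl⟩])
    (Set.finite_of_ncard_ne_zero (by omega))).symm

lemma exists_adj_ne_ne_of_ncard_eq_three {v : V} (hv : (G.neighborSet v).ncard = 3)
    (a b : V) : ∃ c, G.Adj v c ∧ c ≠ a ∧ c ≠ b := by
  obtain ⟨c, hc, hcab⟩ := Set.exists_mem_notMem_of_ncard_lt_ncard (s := {a, b})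
    (t := G.neighborSet v) (by rw [hv]; exact (Set.ncard_insert_le a {b}).trans_lt (by simp))
  simp only [Set.mem_insert_iff, Set.mem_singleton_iff, not_or] at hcab
  exact ⟨c, hc, hcab⟩

lemma CliqueFree.eq_add_one_or_of_adj_of_cycle_five (hG : G.CliqueFree 3) {v : Fin 5 → V}
    (hv : ∀ i, G.Adj (v i) (v (i + 1))) {i j : Fin 5} (hij : G.Adj (v i) (v j)) :
    j = i + 1 ∨ i = j + 1 := by
  have hind := isIndepSet_neighborSet_of_triangleFree G hG
  obtain ⟨k, rfl⟩ : ∃ k, j = i + k := ⟨j - i, by abel⟩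
  fin_cases k
  · simp at hij
  · exact Or.inl rfl
  · exact absurd hij (hind (v (i + 1)) (hv i).symm (by simpa [add_assoc] using hv (i + 1)) hij.ne)
  · have h := hv (i + 3 + 1)
    rw [show i + 3 + 1 + 1 = i by grind] at h
    exact absurd hij.symm (hind (v (i + 3 + 1)) (hv (i + 3)).symm h hij.ne.symm)
  · exact Or.inr (by grind)

section CubicCycle

variable {n : ℕ} [NeZero n]

structure IsCubicCycle (G : SimpleGraph V) (v x : Fin n → V) : Prop where
  injective : Injective v
  neighborSet_eq : ∀ i, G.neighborSet (v i) = {v (i - 1), v (i + 1), x i}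

namespace IsCubicCycle

variable {v x : Fin n → V}

lemma adj_add_one (h : G.IsCubicCycle v x) (i : Fin n) : G.Adj (v i) (v (i + 1)) := by
  rw [← mem_neighborSet, h.neighborSet_eq]
  simp

lemma eq_of_adj_of_notMem_range (h : G.IsCubicCycle v x) {i : Fin n} {w : V}
    (hw : G.Adj (v i) w) (hwv : w ∉ Set.range v) : w = x i := by
  rw [← mem_neighborSet, h.neighborSet_eq] at hw
  rcases hw with rfl | rfl | hw
  exacts [absurd ⟨_, rfl⟩ hwv, absurd ⟨_, rfl⟩ hwv, hw]

lemma exists_coloring_extend {α : Type*} (h : G.IsCubicCycle v x)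
    (hinduced : ∀ i j, G.Adj (v i) (v j) → j = i + 1 ∨ i = j + 1) (c' : V → α)
    (hc' : ∀ u w, G.Adj u w → u ∉ Set.range v → w ∉ Set.range v → c' u ≠ c' w)
    (b : Fin n → α) (hb : ∀ i, b i ≠ b (i + 1)) (hbx : ∀ i, b i ≠ c' (x i)) :
    ∃ c : G.Coloring α, ∀ w ∉ Set.range v, c w = c' w := by
  set c := extend v b c'
  have hcv (i : Fin n) : c (v i) = b i := h.injective.extend_apply b c' i
  have hcw (w : V) (hw : w ∉ Set.range v) : c w = c' w := extend_apply' b c' w hw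
  have hvalid (i : Fin n) (w : V) (hw : G.Adj (v i) w) : c (v i) ≠ c w := by
    by_cases hwv : w ∈ Set.range v
    · obtain ⟨j, rfl⟩ := hwv
      rw [hcv, hcv]
      rcases hinduced i j hw with rfl | rfl
      exacts [hb i, (hb j).symm]
    · rw [hcv, hcw w hwv, h.eq_of_adj_of_notMem_range hw hwv]
      exact hbx i
  refine ⟨Coloring.mk c fun {u w} huw => ?_, hcw⟩
  by_cases hu : u ∈ Set.range v
  · obtain ⟨i, rfl⟩ := hu
    exact hvalid i w huw
  by_cases hw : w ∈ Set.range v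
  · obtain ⟨j, rfl⟩ := hw
    exact (hvalid j u huw.symm).symm
  rw [hcw u hu, hcw w hw]
  exact hc' u w huw hu hw

end IsCubicCycle

end CubicCycle

end SimpleGraph

set_option synthInstance.maxSize 2000 in
set_option maxHeartbeats 1000000 in
lemma exists_cycle_five_coloring_avoiding (a : Fin 5 → Fin 3) (ha : a 0 ≠ a 2) :
    ∃ b : Fin 5 → Fin 3, (∀ i, b i ≠ b (i + 1)) ∧ ∀ i, b i ≠ a i := by
  have key : ∀ a0 a1 a2 a3 a4 : Fin 3, a0 ≠ a2 →
      ∃ b0 b1 b2 b3 b4 : Fin 3, b0 ≠ b1 ∧ b1 ≠ b2 ∧ b2 ≠ b3 ∧ b3 ≠ b4 ∧ b4 ≠ b0 ∧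
        b0 ≠ a0 ∧ b1 ≠ a1 ∧ b2 ≠ a2 ∧ b3 ≠ a3 ∧ b4 ≠ a4 := by
    decide
  obtain ⟨b0, b1, b2, b3, b4, h⟩ := key (a 0) (a 1) (a 2) (a 3) (a 4) ha
  refine ⟨![b0, b1, b2, b3, b4], fun i => ?_, fun i => ?_⟩ <;> fin_cases i <;> simp [h]

namespace PlaneGraph

variable [Fintype V] [DecidableEq V] {P : PlaneGraph V} {v1 v2 v3 v4 v5 x1 x2 x3 x4 : V}

lemma Pentagram.exists_isCubicCycle (hpent : P.Pentagram v1 v2 v3 v4 v5 x1 x2 x3 x4)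
    (hdeg5 : P.deg v5 = 3) :
    ∃ x5, P.graph.IsCubicCycle ![v1, v2, v3, v4, v5] ![x1, x2, x3, x4, x5] := by
  obtain ⟨⟨f, hf⟩, ⟨hd1, hd2, hd3, hd4⟩, ⟨ha1, hx1v5, hx1v2⟩, ⟨ha2, hx2v1, hx2v3⟩,
    ⟨ha3, hx3v2, hx3v4⟩, ⟨ha4, hx4v3, hx4v5⟩⟩ := hpent
  have hcyc : IsCycleList P.graph (List.ofFn ![v1, v2, v3, v4, v5]) := P.bounds_isCycle f _ hf
  have hinj : Injective ![v1, v2, v3, v4, v5] := List.nodup_ofFn.1 hcyc.2.1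
  obtain ⟨x5, ha5, hx5v4, hx5v1⟩ := exists_adj_ne_ne_of_ncard_eq_three hdeg5 v4 v1
  set v := ![v1, v2, v3, v4, v5]
  set x := ![x1, x2, x3, x4, x5]
  have hdeg (i : Fin 5) : (P.graph.neighborSet (v i)).ncard = 3 := by
    fin_cases i <;> assumption
  have hx (i : Fin 5) : P.graph.Adj (v i) (x i) ∧ x i ≠ v (i - 1) ∧ x i ≠ v (i + 1) := by
    fin_cases i <;> simp [v, x, *]
  refine ⟨x5, hinj, fun i => neighborSet_eq_of_ncard_eq_three (hdeg i) ?_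
    (hcyc.adj_add_one i) (hx i).1 (hinj.ne ?_) (hx i).2.1.symm (hx i).2.2.symm⟩
  · simpa using (hcyc.adj_add_one (i - 1)).symm
  · fin_cases i <;> decide

end PlaneGraph

theorem decagram_reduction_general {V : Type} [Fintype V] [DecidableEq V] (P : PlaneGraph V)
    (htf : P.graph.CliqueFree 3) (v1 v2 v3 v4 v5 x1 x2 x3 x4 : V)
    (hpent : P.Pentagram v1 v2 v3 v4 v5 x1 x2 x3 x4) (hdeg5 : P.deg v5 = 3)
    (hne : x1 ≠ x3)
    (hcom : ¬∃ y, y ∉ ([v1, v2, v3, v4, v5] : List V) ∧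
        P.graph.Adj x1 y ∧ P.graph.Adj y x3) :
    (addEdge (deleteVerts P.graph {v1, v2, v3, v4, v5}) x1 x3).CliqueFree 3 ∧
    ∀ c' : (addEdge (deleteVerts P.graph {v1, v2, v3, v4, v5}) x1 x3).Coloring (Fin 3),
      ∃ c : P.graph.Coloring (Fin 3),
        ∀ w, w ∉ ([v1, v2, v3, v4, v5] : List V) → c w = c' w := by
  obtain ⟨x5, hC⟩ := hpent.exists_isCubicCycle hdeg5
  have hrange : Set.range ![v1, v2, v3, v4, v5] = {v1, v2, v3, v4, v5} := by
    ext w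
    simp only [Matrix.range_cons, Matrix.range_empty, Set.union_empty, Set.union_singleton,
      Set.union_insert, Set.mem_insert_iff, Set.mem_singleton_iff]
    tauto
  rw [addEdge_eq_sup_edge]
  refine ⟨cliqueFree_three_sup_edge (htf.anti (deleteVerts_le _ _)) ?_, fun c' => ?_⟩
  · rintro ⟨y, h1y, hy3⟩
    rw [deleteVerts_adj] at h1y hy3
    exact hcom ⟨y, by simpa using h1y.2.2, h1y.1, hy3.1⟩
  obtain ⟨b, hb, hbx⟩ := exists_cycle_five_coloring_avoiding
    (fun i => c' (![x1, x2, x3, x4, x5] i)) (c'.valid (Or.inr (by simp [edge_adj, hne])))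
  obtain ⟨c, hc⟩ := hC.exists_coloring_extend
    (fun _ _ => htf.eq_add_one_or_of_adj_of_cycle_five hC.adj_add_one) c'
    (fun u w huw hu hw => c'.valid (Or.inl (deleteVerts_adj.2 ⟨huw, hrange ▸ hu, hrange ▸ hw⟩)))
    b hb hbx
  exact ⟨c, fun w hw => hc w (by simpa [hrange] using hw)⟩

/-- The decagram reduction: delete the five vertices of a facial 5-cycle of degree-3
vertices and add the edge `x1 x3`.  The result is triangle-free and every proper
3-coloring of it extends to a proper 3-coloring of `G`. -/
theorem decagram_reduction {V : Type} [Fintype V] [DecidableEq V] (P : PlaneGraph V)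
    (htf : P.graph.CliqueFree 3) (v1 v2 v3 v4 v5 x1 x2 x3 x4 : V)
    (hpent : P.Pentagram v1 v2 v3 v4 v5 x1 x2 x3 x4) (hdeg5 : P.deg v5 = 3)
    (hne : x1 ≠ x3) (hadj : ¬P.graph.Adj x1 x3)
    (hcom : ¬∃ y, y ∉ ([v1, v2, v3, v4, v5] : List V) ∧
        P.graph.Adj x1 y ∧ P.graph.Adj y x3) :
    (addEdge (deleteVerts P.graph {v1, v2, v3, v4, v5}) x1 x3).CliqueFree 3 ∧
    ∀ c' : (addEdge (deleteVerts P.graph {v1, v2, v3, v4, v5}) x1 x3).Coloring (Fin 3),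
      ∃ c : P.graph.Coloring (Fin 3),
        ∀ w, w ∉ ([v1, v2, v3, v4, v5] : List V) → c w = c' w :=
  decagram_reduction_general P htf v1 v2 v3 v4 v5 x1 x2 x3 x4 hpent hdeg5 hne hcom
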